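/- Assume (Lip) and that y ↦ f(x,y) is affine for every x ∈ ℝⁿ. Let q_k ≥ q_{k+1} > 0, p_k ≥ p_{k+1} ≥ 0 and ᾱ_k, γ̄_k > 0. Given x_k ∈ X, y_k ∈ Y, λ_k ∈ Λ, define: L̄_k(x,y,λ) := L(x,y,λ) − (q_k/2)‖y‖² − (p_k/2)‖y−y_k‖²; y_{k+1} := the maximizer of L̄_k(x_k,·,λ_k) over Y; x_{k+1} := Prox^{ᾱ_k}_{h,X}(x_k − (1/ᾱ_k)∇_xL(x_k,y_{k+1},λ_k)); λ_{k+1} := P_Λ(λ_k + γ̄_k(Ax_k + By_{k+1} − c)); L̄_{k+1}(x,y,λ) := L(x,y,λ) − (q_{k+1}/2)‖y‖² − (p_{k+1}/2)‖y−y_{k+1}‖²; y_{k+2} := the maximizer of L̄_{k+1}(x_{k+1},·,λ_{k+1}) over Y; Φ_k(x,λ) := max_{y∈Y}L̄_k(x,y,λ); Φ_{k+1}(x,λ) := max_{y∈Y}L̄_{k+1}(x,y,λ); V_k(x,y,λ) := 2Φ_k(x,λ) − L(x,y,λ) + h(x) and V_{k+1}(x,y,λ) := 2Φ_{k+1}(x,λ)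 − L(x,y,λ) + h(x). Then, with L_A := L+‖A‖ and L_B := L+‖B‖: V_{k+1}(x_{k+1},y_{k+1},λ_{k+1}) − V_k(x_k,y_k,λ_k) ≤ −((q_k − 2p_k)/2)·‖y_{k+1}−y_k‖² + (q_k/2)·(‖y_k‖² − ‖y_{k+1}‖²) + (p_k − p_{k+1})·‖y_{k+2}−y_{k+1}‖² − (ᾱ_k − 3L_A/2 − L_B²/(q_k+p_k) − 2L_B²/q_k)·‖x_{k+1}−x_k‖² + (q_k − q_{k+1})·‖y_{k+2}‖² − (1/γ̄_k − 3L_A/2 − L_B²/(q_k+p_k) − 2L_B²/q_k)·‖λ_{k+1}−λ_k‖². -/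

import Mathlib

open scoped RealInnerProductSpace

noncomputable section

/-- ℝ^d as a Euclidean space. -/
abbrev E (d : ℕ) := EuclideanSpace ℝ (Fin d)

/-- The Lagrangian `L(x,y,λ) = f(x,y) − λᵀ(Ax+By−c)`. -/
def lag {n m p : ℕ} (f : E n → E m → ℝ) (A : E n →L[ℝ] E p) (B : E m →L[ℝ] E p)
    (c : E p) (x : E n) (y : E m) (l : E p) : ℝ :=
  f x y - ⟪l, A x + B y - c⟫

/-- Partial gradient of the Lagrangian with respect to `x`. -/
def gradxL {n m p : ℕ} (f : E n → E m → ℝ) (A : E n →L[ℝ] E p) (B : E m →L[ℝ] E p)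
    (c : E p) (x : E n) (y : E m) (l : E p) : E n :=
  gradient (fun x' => lag f A B c x' y l) x

/-- Partial gradient of the Lagrangian with respect to `y`. -/
def gradyL {n m p : ℕ} (f : E n → E m → ℝ) (A : E n →L[ℝ] E p) (B : E m →L[ℝ] E p)
    (c : E p) (x : E n) (y : E m) (l : E p) : E m :=
  gradient (fun y' => lag f A B c x y' l) y

/-- Partial gradient of the Lagrangian with respect to `λ`. -/
def gradlL {n m p : ℕ} (f : E n → E m → ℝ) (A : E n →L[ℝ] E p) (B : E m →L[ℝ] E p)
    (c : E p) (x : E n) (y : E m) (l : E p) : E p :=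
  gradient (fun l' => lag f A B c x y l') l

/-- Assumption (Lip): all four partial-gradient Lipschitz estimates with constant `L`. -/
def LipGrad {n m : ℕ} (f : E n → E m → ℝ) (L : ℝ) : Prop :=
  (∀ x₁ x₂ y, ‖gradient (fun x => f x y) x₁ - gradient (fun x => f x y) x₂‖ ≤ L * ‖x₁ - x₂‖) ∧
  (∀ x y₁ y₂, ‖gradient (fun x => f x y₁) x - gradient (fun x => f x y₂) x‖ ≤ L * ‖y₁ - y₂‖) ∧
  (∀ x y₁ y₂, ‖gradient (f x) y₁ - gradient (f x) y₂‖ ≤ L * ‖y₁ - y₂‖) ∧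
  (∀ x₁ x₂ y, ‖gradient (f x₁) y - gradient (f x₂) y‖ ≤ L * ‖x₁ - x₂‖)

/-- `w = Prox^α_{φ,Z}(v)`: `w` minimizes `φ(z) + (α/2)‖z − v‖²` over `z ∈ Z`. -/
def IsProx {d : ℕ} (φ : E d → ℝ) (Z : Set (E d)) (α : ℝ) (v w : E d) : Prop :=
  w ∈ Z ∧ ∀ z ∈ Z, φ w + α / 2 * ‖w - v‖ ^ 2 ≤ φ z + α / 2 * ‖z - v‖ ^ 2

/-- Componentwise positive part: the Euclidean projection onto the nonnegative orthant. -/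
def posPart {p : ℕ} (v : E p) : E p := WithLp.toLp 2 (fun i => max 0 (v i))

/-- `Λ` together with its Euclidean projection `PΛ`: either the nonnegative orthant
(with componentwise positive part) or the whole space (with the identity). -/
def LamProj {p : ℕ} (Λ : Set (E p)) (PΛ : E p → E p) : Prop :=
  (Λ = {v : E p | ∀ i, 0 ≤ v i} ∧ ∀ v, PΛ v = posPart v) ∨
  (Λ = Set.univ ∧ ∀ v, PΛ v = v)

/-- The regularized Lagrangian `L̄(x,y,λ) = L(x,y,λ) − (q/2)‖y‖² − (p/2)‖y−ȳ‖²`. -/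
def regLag {n m p : ℕ} (f : E n → E m → ℝ) (A : E n →L[ℝ] E p) (B : E m →L[ℝ] E p)
    (c : E p) (q pp : ℝ) (yc : E m) (x : E n) (y : E m) (l : E p) : ℝ :=
  lag f A B c x y l - q / 2 * ‖y‖ ^ 2 - pp / 2 * ‖y - yc‖ ^ 2

/- ### Auxiliary lemmas -/

lemma limit_helper_aux {a b : ℝ} (hb : 0 ≤ b) (H : ∀ t : ℝ, 0 < t → t ≤ 1 → a ≤ t * b) :
    a ≤ 0 := by
  rcases eq_or_lt_of_le hb with hb0 | hb0
  · simpa [← hb0] using H 1 one_pos le_rfl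
  · by_contra hpos
    push_neg at hpos
    have ht1 : (0:ℝ) < min 1 (a / (2 * b)) := by
      apply lt_min one_pos; positivity
    have h1 := H _ ht1 (min_le_left _ _)
    have h2 : min 1 (a / (2 * b)) * b ≤ (a / (2 * b)) * b :=
      mul_le_mul_of_nonneg_right (min_le_right _ _) hb
    have h3 : (a / (2 * b)) * b = a / 2 := by field_simp
    linarith

lemma norm_add_smul_sq_aux {m : ℕ} (w d : E m) (t : ℝ) :
    ‖w + t • d‖ ^ 2 = ‖w‖ ^ 2 + 2 * t * ⟪w, d⟫ + t ^ 2 * ‖d‖ ^ 2 := by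
  rw [norm_add_sq_real, real_inner_smul_right, norm_smul]
  simp [Real.norm_eq_abs, mul_pow, sq_abs]
  ring

section aux
variable {n m p : ℕ}

lemma diff_fx_aux {f : E n → E m → ℝ} (hf : ContDiff ℝ 1 (Function.uncurry f)) (y : E m) :
    Differentiable ℝ (fun x => f x y) := fun x => by
  have := ((hf.differentiable one_ne_zero) (x, y)).comp x ((differentiableAt_id (𝕜 := ℝ) (x := x)).prodMk (differentiableAt_const y))
  exact this

lemma diff_fy_aux {f : E n → E m → ℝ} (hf : ContDiff ℝ 1 (Function.uncurry f)) (x : E n) :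
    Differentiable ℝ (f x) := fun y =>
  ((hf.differentiable one_ne_zero) (x, y)).comp y ((differentiableAt_const x).prodMk differentiableAt_id)

lemma affine_grad_aux {f : E n → E m → ℝ} (hf : ContDiff ℝ 1 (Function.uncurry f))
    (haff : ∀ (x : E n) (y₁ y₂ : E m) (t : ℝ),
      f x (y₁ + t • (y₂ - y₁)) = f x y₁ + t * (f x y₂ - f x y₁))
    (x : E n) (w z : E m) :
    f x z - f x w = ⟪gradient (f x) w, z - w⟫ := by
  have hd : DifferentiableAt ℝ (f x) w := diff_fy_aux hf x w
  have hg : HasGradientAt (f x) (gradient (f x) w) w := hd.hasGradientAt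
  have hline : HasDerivAt (fun t : ℝ => w + t • (z - w)) (z - w) 0 := by
    simpa using ((hasDerivAt_id (0:ℝ)).smul_const (z - w)).const_add w
  have h1 : HasDerivAt (fun t : ℝ => f x (w + t • (z - w))) ⟪gradient (f x) w, z - w⟫ 0 := by
    have hg' : HasFDerivAt (f x) (InnerProductSpace.toDual ℝ (E m) (gradient (f x) w))
        (w + (0:ℝ) • (z - w)) := by simpa using hg.hasFDerivAt
    simpa [InnerProductSpace.toDual_apply_apply, Function.comp_def] using hg'.comp_hasDerivAt 0 hline
  have h2 : HasDerivAt (fun t : ℝ => f x (w + t • (z - w))) (f x z - f x w) 0 := by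
    have he : (fun t : ℝ => f x (w + t • (z - w)))
        = fun t => f x w + t * (f x z - f x w) := by
      funext t; exact haff x w z t
    rw [he]
    simpa using ((hasDerivAt_id (0:ℝ)).mul_const (f x z - f x w)).const_add (f x w)
  exact h2.unique h1

lemma maximizer_vi_aux {Y : Set (E m)} (hYcvx : Convex ℝ Y)
    (f : E n → E m → ℝ) (A : E n →L[ℝ] E p) (B : E m →L[ℝ] E p) (c : E p)
    (haff : ∀ (x : E n) (y₁ y₂ : E m) (t : ℝ),
      f x (y₁ + t • (y₂ - y₁)) = f x y₁ + t * (f x y₂ - f x y₁))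
    (q pp : ℝ) (hq : 0 ≤ q + pp) (yc : E m) (x : E n) (l : E p)
    (w : E m) (hw : w ∈ Y)
    (hmax : ∀ z ∈ Y, regLag f A B c q pp yc x z l ≤ regLag f A B c q pp yc x w l)
    (z : E m) (hz : z ∈ Y) :
    lag f A B c x z l - lag f A B c x w l
      - q * ⟪w, z - w⟫ - pp * ⟪w - yc, z - w⟫ ≤ 0 := by
  set d : E m := z - w with hd
  set a : ℝ := lag f A B c x z l - lag f A B c x w l
      - q * ⟪w, z - w⟫ - pp * ⟪w - yc, z - w⟫ with ha
  have key : ∀ t : ℝ, 0 < t → t ≤ 1 → a ≤ t * ((q + pp) / 2 * ‖d‖ ^ 2) := by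
    intro t ht0 ht1
    have hmem : w + t • d ∈ Y := by
      have hmm := hYcvx hw hz (sub_nonneg.mpr ht1) ht0.le (by ring)
      have he : (1 - t) • w + t • z = w + t • d := by
        rw [hd, smul_sub, sub_smul, one_smul]; abel
      rwa [he] at hmm
    have hfe : f x (w + t • d) = f x w + t * (f x z - f x w) := haff x w z t
    have hinner : ⟪l, A x + B (w + t • d) - c⟫
        = ⟪l, A x + B w - c⟫ + t * ⟪l, B z - B w⟫ := by
      have he : A x + B (w + t • d) - c = (A x + B w - c) + t • (B z - B w) := by
        rw [hd, map_add, map_smul, map_sub]; abel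
      rw [he, inner_add_right, real_inner_smul_right]
    have hlage : lag f A B c x (w + t • d) l
        = lag f A B c x w l + t * (lag f A B c x z l - lag f A B c x w l) := by
      simp only [lag, hfe, hinner]
      have : ⟪l, A x + B z - c⟫ - ⟪l, A x + B w - c⟫ = ⟪l, B z - B w⟫ := by
        rw [← inner_sub_right]
        congr 1
        abel
      linear_combination t * this
    have hn1 : ‖w + t • d‖ ^ 2 = ‖w‖ ^ 2 + 2 * t * ⟪w, d⟫ + t ^ 2 * ‖d‖ ^ 2 :=
      norm_add_smul_sq_aux w d t
    have hn2 : ‖(w + t • d) - yc‖ ^ 2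
        = ‖w - yc‖ ^ 2 + 2 * t * ⟪w - yc, d⟫ + t ^ 2 * ‖d‖ ^ 2 := by
      have he : (w + t • d) - yc = (w - yc) + t • d := by abel
      rw [he]; exact norm_add_smul_sq_aux (w - yc) d t
    have hexp : regLag f A B c q pp yc x (w + t • d) l
        = regLag f A B c q pp yc x w l + t * a - t ^ 2 * ((q + pp) / 2 * ‖d‖ ^ 2) := by
      simp only [regLag, hlage, hn1, hn2]
      simp only [ha, hd]
      ring
    have hle := hmax _ hmem
    rw [hexp] at hle
    have h2 : t * a ≤ t ^ 2 * ((q + pp) / 2 * ‖d‖ ^ 2) := by linarith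
    rw [pow_two, mul_assoc] at h2
    exact (mul_le_mul_iff_right₀ ht0).mp h2
  exact limit_helper_aux (by positivity) key

lemma descent_aux (f : E n → E m → ℝ) (hf : ContDiff ℝ 1 (Function.uncurry f))
    (A : E n →L[ℝ] E p) (B : E m →L[ℝ] E p) (c : E p)
    (L : ℝ)
    (hlip1 : ∀ x₁ x₂ y, ‖gradient (fun x => f x y) x₁ - gradient (fun x => f x y) x₂‖
      ≤ L * ‖x₁ - x₂‖)
    (y : E m) (l : E p) (x₀ x₁ : E n) :
    lag f A B c x₁ y l - lag f A B c x₀ y l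
      ≤ ⟪gradxL f A B c x₀ y l, x₁ - x₀⟫ + L / 2 * ‖x₁ - x₀‖ ^ 2 := by
  set gF : E n → E n := fun x => gradient (fun x' => f x' y) x with hgF
  set T : E n →L[ℝ] ℝ := (innerSL ℝ l).comp A with hT
  set G : E n → E n := fun x => gF x - (InnerProductSpace.toDual ℝ (E n)).symm T with hG
  have hlagF : ∀ x, HasFDerivAt (fun x' => lag f A B c x' y l)
      (InnerProductSpace.toDual ℝ (E n) (gF x) - T) x := by
    intro x
    have h1 : HasFDerivAt (fun x' => f x' y)
        (InnerProductSpace.toDual ℝ (E n) (gF x)) x :=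
      ((diff_fx_aux hf y x).hasGradientAt).hasFDerivAt
    have h2 : HasFDerivAt (fun x' => ⟪l, A x' + B y - c⟫) T x := by
      have he : (fun x' : E n => ⟪l, A x' + B y - c⟫)
          = fun x' => T x' + ⟪l, B y - c⟫ := by
        funext x'
        rw [add_sub_assoc, inner_add_right]
        simp [hT]
      rw [he]
      exact T.hasFDerivAt.add_const _
    exact h1.sub h2
  have hgradG : ∀ x, HasGradientAt (fun x' => lag f A B c x' y l) (G x) x := by
    intro x
    have := (hlagF x).hasGradientAt
    simpa [hG, map_sub, LinearIsometryEquiv.symm_apply_apply] using this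
  have hGlip : ∀ u v, ‖G u - G v‖ ≤ L * ‖u - v‖ := by
    intro u v
    have he : G u - G v = gF u - gF v := by simp [hG]
    rw [he]; exact hlip1 u v y
  set d : E n := x₁ - x₀ with hd
  have hcurve : ∀ t : ℝ, HasDerivAt (fun s : ℝ => lag f A B c (x₀ + s • d) y l)
      ⟪G (x₀ + t • d), d⟫ t := by
    intro t
    have hline : HasDerivAt (fun s : ℝ => x₀ + s • d) d t := by
      simpa using ((hasDerivAt_id t).smul_const d).const_add x₀
    have := ((hgradG (x₀ + t • d)).hasFDerivAt).comp_hasDerivAt t hline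
    simpa [InnerProductSpace.toDual_apply_apply, Function.comp_def] using this
  set ψ : ℝ → ℝ := fun t => lag f A B c (x₀ + t • d) y l
      - t * ⟪G x₀, d⟫ - L / 2 * t ^ 2 * ‖d‖ ^ 2 with hψ
  have hψd : ∀ t : ℝ, HasDerivAt ψ
      (⟪G (x₀ + t • d), d⟫ - ⟪G x₀, d⟫ - L / 2 * (2 * t) * ‖d‖ ^ 2) t := by
    intro t
    have h2 : HasDerivAt (fun s : ℝ => s * ⟪G x₀, d⟫) ⟪G x₀, d⟫ t := by
      simpa using (hasDerivAt_id t).mul_const ⟪G x₀, d⟫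
    have h3 : HasDerivAt (fun s : ℝ => L / 2 * s ^ 2 * ‖d‖ ^ 2)
        (L / 2 * (2 * t) * ‖d‖ ^ 2) t := by
      have h4 : HasDerivAt (fun s : ℝ => s ^ 2) (2 * t) t := by
        simpa using hasDerivAt_pow 2 t
      simpa [mul_assoc, mul_comm, mul_left_comm] using (h4.const_mul (L / 2)).mul_const (‖d‖ ^ 2)
    exact ((hcurve t).sub h2).sub h3
  have hcont : ContinuousOn ψ (Set.Icc (0:ℝ) 1) :=
    fun t _ => (hψd t).differentiableAt.continuousAt.continuousWithinAt
  have hdiff : DifferentiableOn ℝ ψ (interior (Set.Icc (0:ℝ) 1)) :=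
    fun t _ => (hψd t).differentiableAt.differentiableWithinAt
  have hψ' : ∀ t ∈ interior (Set.Icc (0:ℝ) 1), deriv ψ t ≤ 0 := by
    intro t ht
    rw [interior_Icc] at ht
    rw [(hψd t).deriv]
    have h1 : ⟪G (x₀ + t • d) - G x₀, d⟫ ≤ L * t * ‖d‖ ^ 2 := by
      calc ⟪G (x₀ + t • d) - G x₀, d⟫ ≤ ‖G (x₀ + t • d) - G x₀‖ * ‖d‖ :=
            real_inner_le_norm _ _
      _ ≤ (L * ‖(x₀ + t • d) - x₀‖) * ‖d‖ :=
            mul_le_mul_of_nonneg_right (hGlip _ _) (norm_nonneg _)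
      _ = L * t * ‖d‖ ^ 2 := by
            have he : (x₀ + t • d) - x₀ = t • d := by abel
            rw [he, norm_smul, Real.norm_eq_abs, abs_of_pos ht.1]; ring
    have h2 : ⟪G (x₀ + t • d) - G x₀, d⟫ = ⟪G (x₀ + t • d), d⟫ - ⟪G x₀, d⟫ :=
      inner_sub_left _ _ _
    linarith
  have hanti := antitoneOn_of_deriv_nonpos (convex_Icc (0:ℝ) 1) hcont hdiff hψ'
  have hfin := hanti (Set.left_mem_Icc.mpr zero_le_one) (Set.right_mem_Icc.mpr zero_le_one)
    zero_le_one
  have hψ0 : ψ 0 = lag f A B c x₀ y l := by simp [hψ]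
  have hψ1 : ψ 1 = lag f A B c x₁ y l - ⟪G x₀, d⟫ - L / 2 * ‖d‖ ^ 2 := by
    have he : x₀ + (1:ℝ) • d = x₁ := by rw [one_smul, hd]; abel
    simp only [hψ]
    rw [he]
    norm_num
  have hGx₀ : gradxL f A B c x₀ y l = G x₀ := (hgradG x₀).gradient
  rw [hGx₀]
  rw [hψ0, hψ1] at hfin
  linarith

lemma prox_vi_aux {d : ℕ} {X : Set (E d)} (hXcvx : Convex ℝ X)
    {h : E d → ℝ} (hhcvx : ConvexOn ℝ Set.univ h)
    {α : ℝ} (hα : 0 < α) {v w : E d} (hw : IsProx h X α v w)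
    {z : E d} (hz : z ∈ X) :
    0 ≤ h z - h w + α * ⟪w - v, z - w⟫ := by
  set dd : E d := z - w with hdd
  have key : ∀ t : ℝ, 0 < t → t ≤ 1 →
      -(h z - h w + α * ⟪w - v, dd⟫) ≤ t * (α / 2 * ‖dd‖ ^ 2) := by
    intro t ht0 ht1
    have hmem : w + t • dd ∈ X := by
      have hmm := hXcvx hw.1 hz (sub_nonneg.mpr ht1) ht0.le (by ring)
      have he : (1 - t) • w + t • z = w + t • dd := by
        rw [hdd, smul_sub, sub_smul, one_smul]; abel
      rwa [he] at hmm
    have hconv : h (w + t • dd) ≤ h w + t * (h z - h w) := by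
      have hmm := hhcvx.2 (Set.mem_univ w) (Set.mem_univ z)
        (sub_nonneg.mpr ht1) ht0.le (by ring : (1 - t) + t = 1)
      have he : (1 - t) • w + t • z = w + t • dd := by
        rw [hdd, smul_sub, sub_smul, one_smul]; abel
      rw [he] at hmm
      calc h (w + t • dd) ≤ (1 - t) * h w + t * h z := hmm
      _ = h w + t * (h z - h w) := by ring
    have hns : ‖(w + t • dd) - v‖ ^ 2
        = ‖w - v‖ ^ 2 + 2 * t * ⟪w - v, dd⟫ + t ^ 2 * ‖dd‖ ^ 2 := by
      have he : (w + t • dd) - v = (w - v) + t • dd := by abel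
      rw [he]; exact norm_add_smul_sq_aux (w - v) dd t
    have hmin := hw.2 _ hmem
    rw [hns] at hmin
    have h4 : 0 ≤ t * (h z - h w) + α * t * ⟪w - v, dd⟫ + α / 2 * t ^ 2 * ‖dd‖ ^ 2 := by
      nlinarith [hmin]
    have h5 : t * (-(h z - h w + α * ⟪w - v, dd⟫)) ≤ t * (t * (α / 2 * ‖dd‖ ^ 2)) := by
      nlinarith [h4]
    exact (mul_le_mul_iff_right₀ ht0).mp h5
  have := limit_helper_aux (by positivity) key
  linarith

lemma dual_vi_aux {p : ℕ} {Λ : Set (E p)} {PΛ : E p → E p} (hΛ : LamProj Λ PΛ)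
    {l₀ : E p} (hl₀ : l₀ ∈ Λ) {γ : ℝ} (hγ : 0 < γ) (dd : E p) {l₁ : E p}
    (hl₁ : l₁ = PΛ (l₀ + γ • dd)) :
    1 / γ * ‖l₁ - l₀‖ ^ 2 ≤ ⟪dd, l₁ - l₀⟫ := by
  have key : ‖l₁ - l₀‖ ^ 2 ≤ γ * ⟪dd, l₁ - l₀⟫ := by
    rcases hΛ with ⟨hΛe, hP⟩ | ⟨hΛe, hP⟩
    · rw [hP] at hl₁
      have hl₀' : ∀ i, 0 ≤ l₀ i := by rw [hΛe] at hl₀; exact hl₀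
      have hkey : ⟪(l₀ + γ • dd) - l₁, l₀ - l₁⟫ ≤ 0 := by
        rw [hl₁]
        rw [PiLp.inner_apply]
        apply Finset.sum_nonpos
        intro i _
        simp only [RCLike.inner_apply, conj_trivial, PiLp.sub_apply]
        have hpp : posPart (l₀ + γ • dd) i = max 0 ((l₀ + γ • dd) i) := rfl
        rw [hpp]
        rcases le_or_gt 0 ((l₀ + γ • dd) i) with hge | hlt
        · rw [max_eq_right hge]; simp
        · rw [max_eq_left hlt.le]
          have : (l₀ + γ • dd) i - 0 < 0 := by simpa using hlt
          nlinarith [hl₀' i]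
      have hexp : ⟪(l₀ + γ • dd) - l₁, l₀ - l₁⟫
          = ‖l₁ - l₀‖ ^ 2 - γ * ⟪dd, l₁ - l₀⟫ := by
        have he : (l₀ + γ • dd) - l₁ = γ • dd - (l₁ - l₀) := by abel
        have he2 : l₀ - l₁ = -(l₁ - l₀) := by abel
        rw [he, he2, inner_neg_right, inner_sub_left, real_inner_smul_left,
          real_inner_self_eq_norm_sq]
        ring
      linarith [hexp ▸ hkey]
    · rw [hP] at hl₁
      have he : l₁ - l₀ = γ • dd := by rw [hl₁]; abel
      rw [he, real_inner_smul_right, norm_smul, Real.norm_eq_abs, abs_of_pos hγ,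
        real_inner_self_eq_norm_sq, mul_pow]
      ring_nf
      exact le_rfl
  rw [div_mul_eq_mul_div, one_mul, div_le_iff₀ hγ]
  linarith [key]

end aux
set_option maxHeartbeats 1000000 in
lemma scalar_assembly {qk qk1 pk pk1 αb γb L nA nB : ℝ}
    {P00 P01 P02 Q11 R11 R12 h0 h1 n0 n1 n2 i0 i1 j0 j1 Gx Dd Ee W1 W0 U1 U0 nx ny nl s10 : ℝ}
    (hq0 : 0 < qk) (hq1 : 0 < qk1) (hp1 : 0 ≤ pk1) (hp : pk1 ≤ pk)
    (hαb : 0 < αb) (hγb : 0 < γb) (hL : 0 < L) (hnA : 0 ≤ nA) (hnB : 0 ≤ nB)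
    (hA1 : P00 - P01 - qk * i0 - pk * j0 ≤ 0)
    (hA2 : P02 - P01 - qk * i1 - pk * j1 ≤ 0)
    (hA3 : R12 - R11 = W1 - U1)
    (hA4 : P02 - P01 = W0 - U0)
    (hA5 : W1 - W0 ≤ L * nx * ny)
    (hA6 : U0 - U1 ≤ nB * nl * ny)
    (hA7 : Q11 - P01 ≤ Gx + L / 2 * nx ^ 2)
    (hA8 : Q11 - R11 = Dd + Ee)
    (hA9 : 1 / γb * nl ^ 2 ≤ Dd)
    (hA10 : -Ee ≤ nA * nl * nx)
    (hA11 : h1 - h0 ≤ -(αb * nx ^ 2) - Gx)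
    (hE1 : 2 * i0 = n0 - n1 - s10)
    (hE2 : 2 * i1 = n2 - n1 - ny ^ 2)
    (hE3 : j0 = -s10)
    (hE4 : 2 * j1 ≤ s10 + ny ^ 2) :
    (2 * (R12 - qk1 / 2 * n2 - pk1 / 2 * ny ^ 2) - R11 + h1)
      - (2 * (P01 - qk / 2 * n1 - pk / 2 * s10) - P00 + h0)
    ≤ -((qk - 2 * pk) / 2) * s10
      + qk / 2 * (n0 - n1)
      + (pk - pk1) * ny ^ 2
      - (αb - 3 * (L + nA) / 2 - (L + nB) ^ 2 / (qk + pk)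
          - 2 * (L + nB) ^ 2 / qk) * nx ^ 2
      + (qk - qk1) * n2
      - (1 / γb - 3 * (L + nA) / 2 - (L + nB) ^ 2 / (qk + pk)
          - 2 * (L + nB) ^ 2 / qk) * nl ^ 2 := by
  have hp0 : (0:ℝ) ≤ pk := le_trans hp1 hp
  have hqp : (0:ℝ) < qk + pk := by linarith
  have hE4' : pk * (2 * j1) ≤ pk * (s10 + ny ^ 2) := mul_le_mul_of_nonneg_left hE4 hp0
  have hY1 : 2 * (L * nx * ny) ≤ qk / 2 * ny ^ 2 + 2 * L ^ 2 / qk * nx ^ 2 := by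
    rw [← sub_nonneg]
    have he : qk / 2 * ny ^ 2 + 2 * L ^ 2 / qk * nx ^ 2 - 2 * (L * nx * ny)
        = (qk * ny - 2 * L * nx) ^ 2 / (2 * qk) := by field_simp; ring
    rw [he]; positivity
  have hY2 : 2 * (nB * nl * ny) ≤ qk / 2 * ny ^ 2 + 2 * nB ^ 2 / qk * nl ^ 2 := by
    rw [← sub_nonneg]
    have he : qk / 2 * ny ^ 2 + 2 * nB ^ 2 / qk * nl ^ 2 - 2 * (nB * nl * ny)
        = (qk * ny - 2 * nB * nl) ^ 2 / (2 * qk) := by field_simp; ring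
    rw [he]; positivity
  have hY3 : nA * nl * nx ≤ nA / 2 * nl ^ 2 + nA / 2 * nx ^ 2 := by
    have hsq : (0:ℝ) ≤ (nl - nx) ^ 2 := sq_nonneg _
    have hexp : (nl - nx) ^ 2 = nl ^ 2 - 2 * (nl * nx) + nx ^ 2 := by ring
    have hprod : nl * nx ≤ (nl ^ 2 + nx ^ 2) / 2 := by linarith [hexp ▸ hsq]
    have hmul := mul_le_mul_of_nonneg_left hprod hnA
    have hre : nA * (nl * nx) = nA * nl * nx := by ring
    linarith [hre ▸ hmul]
  have hs1 : 0 ≤ L * nx ^ 2 := mul_nonneg hL.le (sq_nonneg _)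
  have hs2 : 0 ≤ nA * nx ^ 2 := mul_nonneg hnA (sq_nonneg _)
  have hs3 : 0 ≤ L * nl ^ 2 := mul_nonneg hL.le (sq_nonneg _)
  have hs4 : 0 ≤ nA * nl ^ 2 := mul_nonneg hnA (sq_nonneg _)
  have hs5 : 0 ≤ (L + nB) ^ 2 / (qk + pk) * nx ^ 2 :=
    mul_nonneg (div_nonneg (sq_nonneg _) hqp.le) (sq_nonneg _)
  have hs6 : 0 ≤ (L + nB) ^ 2 / (qk + pk) * nl ^ 2 :=
    mul_nonneg (div_nonneg (sq_nonneg _) hqp.le) (sq_nonneg _)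
  have hLB : L ^ 2 ≤ (L + nB) ^ 2 := pow_le_pow_left₀ hL.le (by linarith) 2
  have hBB : nB ^ 2 ≤ (L + nB) ^ 2 := pow_le_pow_left₀ hnB (by linarith) 2
  have hc1 : 2 * L ^ 2 / qk * nx ^ 2 ≤ 2 * (L + nB) ^ 2 / qk * nx ^ 2 := by
    apply mul_le_mul_of_nonneg_right _ (sq_nonneg _)
    apply (div_le_div_iff_of_pos_right hq0).mpr
    linarith
  have hc2 : 2 * nB ^ 2 / qk * nl ^ 2 ≤ 2 * (L + nB) ^ 2 / qk * nl ^ 2 := by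
    apply mul_le_mul_of_nonneg_right _ (sq_nonneg _)
    apply (div_le_div_iff_of_pos_right hq0).mpr
    linarith
  have hMa : R12 - R11 ≤ qk * i1 + pk * j1 + L * nx * ny + nB * nl * ny := by
    linarith [hA2, hA3, hA4, hA5, hA6]
  have hMc : P00 - P01 ≤ qk / 2 * (n0 - n1) - (qk / 2 + pk) * s10 := by
    have h1 : qk * (2 * i0) = qk * (n0 - n1 - s10) := by rw [hE1]
    have h2 : pk * j0 = pk * (-s10) := by rw [hE3]
    linarith [hA1]
  have hMd : Q11 - P01 + (h1 - h0) ≤ -(αb - L / 2) * nx ^ 2 := by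
    linarith [hA7, hA11]
  have hMe : -(Q11 - R11) ≤ -(1 / γb) * nl ^ 2 + nA / 2 * nl ^ 2 + nA / 2 * nx ^ 2 := by
    linarith [hA8, hA9, hA10, hY3]
  have hE2' : qk * (2 * i1) = qk * (n2 - n1 - ny ^ 2) := by rw [hE2]
  linarith [hMa, hMc, hMd, hMe, hE2', hE4', hY1, hY2,
    hs1, hs2, hs3, hs4, hs5, hs6, hc1, hc2]
set_option maxHeartbeats 1000000 in
/-- Lemma 3.5: one-step recursion for the potential
`V_k(x,y,λ) = 2Φ_k(x,λ) − L(x,y,λ) + h(x)` along one full PDPG-L iteration in the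
nonconvex–linear setting. -/
theorem potential_recursion_linear
    {n m p : ℕ} (X : Set (E n)) (Y : Set (E m))
    (hXne : X.Nonempty) (hXcvx : Convex ℝ X) (hXcpt : IsCompact X)
    (hYne : Y.Nonempty) (hYcvx : Convex ℝ Y) (hYcpt : IsCompact Y)
    (f : E n → E m → ℝ) (hf : ContDiff ℝ 1 (Function.uncurry f))
    (h : E n → ℝ) (hhcvx : ConvexOn ℝ Set.univ h) (hhcont : Continuous h)
    (A : E n →L[ℝ] E p) (B : E m →L[ℝ] E p) (c : E p)
    (L : ℝ) (hL : 0 < L) (hlip : LipGrad f L)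
    (haff : ∀ (x : E n) (y₁ y₂ : E m) (t : ℝ),
      f x (y₁ + t • (y₂ - y₁)) = f x y₁ + t * (f x y₂ - f x y₁))
    (Λ : Set (E p)) (PΛ : E p → E p) (hΛ : LamProj Λ PΛ)
    (qk qk1 pk pk1 αb γb : ℝ) (hq : qk ≥ qk1) (hq1 : 0 < qk1) (hp : pk ≥ pk1)
    (hp1 : 0 ≤ pk1) (hαb : 0 < αb) (hγb : 0 < γb)
    (xk : E n) (yk : E m) (lk : E p) (hxk : xk ∈ X) (hyk : yk ∈ Y) (hlk : lk ∈ Λ)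
    (yk1 : E m) (hyk1Y : yk1 ∈ Y)
    (hyk1 : ∀ z ∈ Y, regLag f A B c qk pk yk xk z lk ≤ regLag f A B c qk pk yk xk yk1 lk)
    (xk1 : E n) (hxk1 : IsProx h X αb (xk - αb⁻¹ • gradxL f A B c xk yk1 lk) xk1)
    (lk1 : E p) (hlk1 : lk1 = PΛ (lk + γb • (A xk + B yk1 - c)))
    (yk2 : E m) (hyk2Y : yk2 ∈ Y)
    (hyk2 : ∀ z ∈ Y,
      regLag f A B c qk1 pk1 yk1 xk1 z lk1 ≤ regLag f A B c qk1 pk1 yk1 xk1 yk2 lk1) :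
    (2 * sSup ((fun y => regLag f A B c qk1 pk1 yk1 xk1 y lk1) '' Y)
        - lag f A B c xk1 yk1 lk1 + h xk1)
      - (2 * sSup ((fun y => regLag f A B c qk pk yk xk y lk) '' Y)
        - lag f A B c xk yk lk + h xk)
    ≤ -((qk - 2 * pk) / 2) * ‖yk1 - yk‖ ^ 2
      + qk / 2 * (‖yk‖ ^ 2 - ‖yk1‖ ^ 2)
      + (pk - pk1) * ‖yk2 - yk1‖ ^ 2
      - (αb - 3 * (L + ‖A‖) / 2 - (L + ‖B‖) ^ 2 / (qk + pk)
          - 2 * (L + ‖B‖) ^ 2 / qk) * ‖xk1 - xk‖ ^ 2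
      + (qk - qk1) * ‖yk2‖ ^ 2
      - (1 / γb - 3 * (L + ‖A‖) / 2 - (L + ‖B‖) ^ 2 / (qk + pk)
          - 2 * (L + ‖B‖) ^ 2 / qk) * ‖lk1 - lk‖ ^ 2 := by
  obtain ⟨hlip1, hlip2, hlip3, hlip4⟩ := hlip
  have hq0 : 0 < qk := lt_of_lt_of_le hq1 hq
  have hp0 : 0 ≤ pk := le_trans hp1 hp
  -- identify the suprema
  have hsup1 : sSup ((fun y => regLag f A B c qk pk yk xk y lk) '' Y)
      = regLag f A B c qk pk yk xk yk1 lk :=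
    IsGreatest.csSup_eq ⟨Set.mem_image_of_mem _ hyk1Y, by
      rintro _ ⟨z, hz, rfl⟩; exact hyk1 z hz⟩
  have hsup2 : sSup ((fun y => regLag f A B c qk1 pk1 yk1 xk1 y lk1) '' Y)
      = regLag f A B c qk1 pk1 yk1 xk1 yk2 lk1 :=
    IsGreatest.csSup_eq ⟨Set.mem_image_of_mem _ hyk2Y, by
      rintro _ ⟨z, hz, rfl⟩; exact hyk2 z hz⟩
  rw [hsup1, hsup2]
  -- variational inequalities for the y-step at iteration k
  have hA1 := maximizer_vi_aux hYcvx f A B c haff qk pk (by linarith) yk xk lk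
    yk1 hyk1Y hyk1 yk hyk
  have hA2 := maximizer_vi_aux hYcvx f A B c haff qk pk (by linarith) yk xk lk
    yk1 hyk1Y hyk1 yk2 hyk2Y
  -- exact expression for lag differences in y (affineness)
  have haux : ∀ (x : E n) (l : E p), lag f A B c x yk2 l - lag f A B c x yk1 l
      = ⟪gradient (f x) yk1, yk2 - yk1⟫ - ⟪l, B yk2 - B yk1⟫ := by
    intro x l
    have h1 := affine_grad_aux hf haff x yk1 yk2
    have h2 : ⟪l, (A x + B yk2 - c) - (A x + B yk1 - c)⟫
        = ⟪l, A x + B yk2 - c⟫ - ⟪l, A x + B yk1 - c⟫ := inner_sub_right _ _ _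
    have h3 : (A x + B yk2 - c) - (A x + B yk1 - c) = B yk2 - B yk1 := by abel
    rw [h3] at h2
    simp only [lag]
    linear_combination h1 + h2
  have hA3 := haux xk1 lk1
  have hA4 := haux xk lk
  -- Lipschitz transfer bounds
  have hA5 : ⟪gradient (f xk1) yk1, yk2 - yk1⟫ - ⟪gradient (f xk) yk1, yk2 - yk1⟫
      ≤ L * ‖xk1 - xk‖ * ‖yk2 - yk1‖ := by
    have h3 := inner_sub_left (𝕜 := ℝ) (gradient (f xk1) yk1) (gradient (f xk) yk1) (yk2 - yk1)
    have h1 : ⟪gradient (f xk1) yk1 - gradient (f xk) yk1, yk2 - yk1⟫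
        ≤ ‖gradient (f xk1) yk1 - gradient (f xk) yk1‖ * ‖yk2 - yk1‖ :=
      real_inner_le_norm _ _
    have h4 := mul_le_mul_of_nonneg_right (hlip4 xk1 xk yk1) (norm_nonneg (yk2 - yk1))
    rw [h3] at h1
    linarith
  have hA6 : ⟪lk, B yk2 - B yk1⟫ - ⟪lk1, B yk2 - B yk1⟫
      ≤ ‖B‖ * ‖lk1 - lk‖ * ‖yk2 - yk1‖ := by
    have h3 := inner_sub_left (𝕜 := ℝ) lk lk1 (B yk2 - B yk1)
    have h1 : ⟪lk - lk1, B yk2 - B yk1⟫ ≤ ‖lk - lk1‖ * ‖B yk2 - B yk1‖ :=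
      real_inner_le_norm _ _
    have h2 : ‖B yk2 - B yk1‖ ≤ ‖B‖ * ‖yk2 - yk1‖ := by
      rw [← map_sub]; exact B.le_opNorm _
    have h4 : ‖lk - lk1‖ = ‖lk1 - lk‖ := norm_sub_rev _ _
    rw [h4] at h1
    have h5 := mul_le_mul_of_nonneg_left h2 (norm_nonneg (lk1 - lk))
    rw [h3] at h1
    linarith
  -- descent step in x
  have hA7 := descent_aux f hf A B c L hlip1 yk1 lk xk xk1
  -- multiplier shift identity
  have hA8 : lag f A B c xk1 yk1 lk - lag f A B c xk1 yk1 lk1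
      = ⟪lk1 - lk, A xk + B yk1 - c⟫ + ⟪lk1 - lk, A xk1 - A xk⟫ := by
    have h1 := inner_sub_left (𝕜 := ℝ) lk1 lk (A xk1 + B yk1 - c)
    have h2 := inner_add_right (𝕜 := ℝ) (lk1 - lk) (A xk + B yk1 - c) (A xk1 - A xk)
    have h3 : (A xk + B yk1 - c) + (A xk1 - A xk) = A xk1 + B yk1 - c := by abel
    rw [h3] at h2
    simp only [lag]
    linear_combination h2 - h1
  -- dual ascent inequality
  have hdvi := dual_vi_aux hΛ hlk hγb (A xk + B yk1 - c) hlk1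
  have hA9 : 1 / γb * ‖lk1 - lk‖ ^ 2 ≤ ⟪lk1 - lk, A xk + B yk1 - c⟫ := by
    rwa [real_inner_comm] at hdvi
  have hA10 : -⟪lk1 - lk, A xk1 - A xk⟫ ≤ ‖A‖ * ‖lk1 - lk‖ * ‖xk1 - xk‖ := by
    have h1 : ⟪-(lk1 - lk), A xk1 - A xk⟫ ≤ ‖-(lk1 - lk)‖ * ‖A xk1 - A xk‖ :=
      real_inner_le_norm _ _
    rw [inner_neg_left, norm_neg] at h1
    have h2 : ‖A xk1 - A xk‖ ≤ ‖A‖ * ‖xk1 - xk‖ := by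
      rw [← map_sub]; exact A.le_opNorm _
    have h5 := mul_le_mul_of_nonneg_left h2 (norm_nonneg (lk1 - lk))
    linarith
  -- prox inequality
  have hpvi := prox_vi_aux hXcvx hhcvx hαb hxk1 hxk
  have hA11 : h xk1 - h xk ≤ -(αb * ‖xk1 - xk‖ ^ 2)
      - ⟪gradxL f A B c xk yk1 lk, xk1 - xk⟫ := by
    set g := gradxL f A B c xk yk1 lk with hg
    have hiden : ⟪xk1 - (xk - αb⁻¹ • g), xk - xk1⟫
        = -‖xk1 - xk‖ ^ 2 - αb⁻¹ * ⟪g, xk1 - xk⟫ := by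
      have he : xk1 - (xk - αb⁻¹ • g) = (xk1 - xk) + αb⁻¹ • g := by abel
      have he2 : xk - xk1 = -(xk1 - xk) := by abel
      rw [he, he2, inner_neg_right, inner_add_left, real_inner_smul_left,
        real_inner_self_eq_norm_sq]
      ring
    rw [hiden] at hpvi
    have hexp : αb * (-‖xk1 - xk‖ ^ 2 - αb⁻¹ * ⟪g, xk1 - xk⟫)
        = -(αb * ‖xk1 - xk‖ ^ 2) - ⟪g, xk1 - xk⟫ := by
      field_simp
    rw [hexp] at hpvi
    linarith
  -- polarization identities
  have hE1 : 2 * ⟪yk1, yk - yk1⟫ = ‖yk‖ ^ 2 - ‖yk1‖ ^ 2 - ‖yk1 - yk‖ ^ 2 := by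
    have h0 := norm_sub_sq_real yk yk1
    have h2 : ⟪yk1, yk - yk1⟫ = ⟪yk1, yk⟫ - ⟪yk1, yk1⟫ := inner_sub_right _ _ _
    have h3 : ⟪yk1, yk1⟫ = ‖yk1‖ ^ 2 := real_inner_self_eq_norm_sq _
    have h4 : ⟪yk1, yk⟫ = ⟪yk, yk1⟫ := real_inner_comm _ _
    have h5 : ‖yk - yk1‖ ^ 2 = ‖yk1 - yk‖ ^ 2 := by rw [norm_sub_rev]
    linarith
  have hE2 : 2 * ⟪yk1, yk2 - yk1⟫ = ‖yk2‖ ^ 2 - ‖yk1‖ ^ 2 - ‖yk2 - yk1‖ ^ 2 := by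
    have h0 := norm_sub_sq_real yk2 yk1
    have h2 : ⟪yk1, yk2 - yk1⟫ = ⟪yk1, yk2⟫ - ⟪yk1, yk1⟫ := inner_sub_right _ _ _
    have h3 : ⟪yk1, yk1⟫ = ‖yk1‖ ^ 2 := real_inner_self_eq_norm_sq _
    have h4 : ⟪yk1, yk2⟫ = ⟪yk2, yk1⟫ := real_inner_comm _ _
    linarith
  have hE3 : ⟪yk1 - yk, yk - yk1⟫ = -‖yk1 - yk‖ ^ 2 := by
    have he : yk - yk1 = -(yk1 - yk) := by abel
    rw [he, inner_neg_right, real_inner_self_eq_norm_sq]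
  have hE4 : 2 * ⟪yk1 - yk, yk2 - yk1⟫ ≤ ‖yk1 - yk‖ ^ 2 + ‖yk2 - yk1‖ ^ 2 := by
    have h0 := norm_sub_sq_real (yk1 - yk) (yk2 - yk1)
    have h5 : (0:ℝ) ≤ ‖(yk1 - yk) - (yk2 - yk1)‖ ^ 2 := sq_nonneg _
    linarith
  simp only [regLag]
  exact scalar_assembly hq0 hq1 hp1 hp hαb hγb hL (norm_nonneg A) (norm_nonneg B)
    hA1 hA2 hA3 hA4 hA5 hA6 hA7 hA8 hA9 hA10 hA11 hE1 hE2 hE3 hE4
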